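/- Let A and B be words over {+,-,*} such that the cyclic words A-B** and A**B+ represent the same cycle (one is a rotation of the other or of its dual). Then A is self-dual (A = Ā) and B is self-dual (B = B̄). -/
import Mathlib


inductive Symb : Type
  | plus | minus | star
deriving DecidableEq


/-- the dual of a symbol: `+` ↦ `-`, `-` ↦ `+`, `*` ↦ `*` -/
def dualSym : Symb → Symb
  | Symb.plus => Symb.minus
  | Symb.minus => Symb.plus
  | Symb.star => Symb.star

/-- the dual (involution) of a word: reverse and dualize each symbol -/
def dualWord (W : List Symb) : List Symb := (W.map dualSym).reverse

/-- the arc relation of the reflexive path `P(W)` on vertices `{0,…,|W|}` -/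
def pathArc (W : List Symb) (i j : ℕ) : Prop :=
  i ≤ W.length ∧ j ≤ W.length ∧
    (i = j ∨ (j = i + 1 ∧ (W[i]? = some Symb.plus ∨ W[i]? = some Symb.star))
           ∨ (i = j + 1 ∧ (W[j]? = some Symb.minus ∨ W[j]? = some Symb.star)))

/-- `f` is an end-point preserving homomorphism from the path `P(V)` onto the path `P(U)` -/
def EPHom (V U : List Symb) (f : ℕ → ℕ) : Prop :=
  f 0 = 0 ∧ f V.length = U.length ∧
  (∀ i j, pathArc V i j → pathArc U (f i) (f j)) ∧
  (∀ m, m ≤ U.length → ∃ i, i ≤ V.length ∧ f i = m)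

/-- the order on words: `U ≤ V` iff there is an end-point preserving
homomorphism from `P(V)` onto `P(U)` -/
def wle (U V : List Symb) : Prop := ∃ f, EPHom V U f

/-- `W` and `Z` represent the same cycle: `Z` or its dual is a rotation of `W` -/
def SameCycle (W Z : List Symb) : Prop :=
  ∃ U V : List Symb, W = U ++ V ∧ (Z = V ++ U ∨ dualWord Z = V ++ U)

lemma dualWord_length (X : List Symb) : (dualWord X).length = X.length := by
  simp [dualWord]

lemma dualWord_getElem? (X : List Symb) {i : ℕ} (h : i < X.length) :
    (dualWord X)[i]? = (X[X.length - 1 - i]?).map dualSym := by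
  unfold dualWord
  rw [List.getElem?_reverse (by simpa using h), List.getElem?_map]
  simp

lemma rot_get {α : Type} (U V : List α) {i : ℕ} (h : i < V.length) :
    (V ++ U)[i]? = (U ++ V)[U.length + i]? := by
  rw [List.getElem?_append_left h, List.getElem?_append_right (by omega)]
  congr 1
  omega

lemma W_get_A (A B : List Symb) {k : ℕ} (hk : k < A.length) :
    (A ++ Symb.minus :: (B ++ [Symb.star, Symb.star]))[k]? = A[k]? :=
  List.getElem?_append_left hk

lemma W_get_B (A B : List Symb) {j : ℕ} (hj : j < B.length) :
    (A ++ Symb.minus :: (B ++ [Symb.star, Symb.star]))[A.length + 1 + j]? = B[j]? := by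
  rw [List.getElem?_append_right (by omega)]
  have h : A.length + 1 + j - A.length = j + 1 := by omega
  rw [h, List.getElem?_cons_succ, List.getElem?_append_left hj]

lemma W_get_star1 (A B : List Symb) :
    (A ++ Symb.minus :: (B ++ [Symb.star, Symb.star]))[A.length + 1 + B.length]? =
      some Symb.star := by
  rw [List.getElem?_append_right (by omega)]
  have h : A.length + 1 + B.length - A.length = B.length + 1 := by omega
  rw [h, List.getElem?_cons_succ, List.getElem?_append_right (le_refl _)]
  simp

lemma W_get_star2 (A B : List Symb) :
    (A ++ Symb.minus :: (B ++ [Symb.star, Symb.star]))[A.length + 1 + B.length + 1]? =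
      some Symb.star := by
  rw [List.getElem?_append_right (by omega)]
  have h : A.length + 1 + B.length + 1 - A.length = B.length + 1 + 1 := by omega
  rw [h, List.getElem?_cons_succ, List.getElem?_append_right (by omega)]
  have h2 : B.length + 1 - B.length = 1 := by omega
  rw [h2]
  rfl

lemma D_get_B (A B : List Symb) {j : ℕ} (hj : j < B.length) :
    (Symb.minus :: (dualWord B ++ ([Symb.star, Symb.star] ++ dualWord A)))[1 + j]? =
      (B[B.length - 1 - j]?).map dualSym := by
  have h : 1 + j = j + 1 := by omega
  rw [h, List.getElem?_cons_succ,
    List.getElem?_append_left (by rw [dualWord_length]; exact hj),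
    dualWord_getElem? B hj]

lemma D_get_A (A B : List Symb) {i : ℕ} (hi : i < A.length) :
    (Symb.minus :: (dualWord B ++ ([Symb.star, Symb.star] ++ dualWord A)))[B.length + 3 + i]? =
      (A[A.length - 1 - i]?).map dualSym := by
  have h : B.length + 3 + i = (B.length + 2 + i) + 1 := by omega
  rw [h, List.getElem?_cons_succ,
    List.getElem?_append_right (by rw [dualWord_length]; omega)]
  rw [dualWord_length]
  have h2 : B.length + 2 + i - B.length = i + 2 := by omega
  rw [h2, List.getElem?_append_right (by simp)]
  have h3 : i + 2 - ([Symb.star, Symb.star] : List Symb).length = i := by simp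
  rw [h3, dualWord_getElem? A hi]

lemma key (A B U V : List Symb)
    (h1 : A ++ Symb.minus :: (B ++ [Symb.star, Symb.star]) = U ++ V)
    (h2 : Symb.minus :: (dualWord B ++ ([Symb.star, Symb.star] ++ dualWord A)) = V ++ U)
    (hk : U.length < A.length + B.length + 3) :
    dualWord A = A ∧ dualWord B = B := by
  have hlen : U.length + V.length = A.length + B.length + 3 := by
    have := congrArg List.length h1
    simp at this
    omega
  have hget : ∀ i, i < V.length →
      (Symb.minus :: (dualWord B ++ ([Symb.star, Symb.star] ++ dualWord A)))[i]?
        = (A ++ Symb.minus :: (B ++ [Symb.star, Symb.star]))[U.length + i]? := by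
    intro i hi
    rw [h2, rot_get U V hi, ← h1]
  rcases lt_trichotomy U.length A.length with hka | hka | hka
  · -- U.length < A.length : contradiction
    exfalso
    have e1 := hget 0 (by omega)
    rw [Nat.add_zero, W_get_A A B (by omega), List.getElem?_cons_zero] at e1
    have e2 := hget (A.length + B.length + 2 - U.length) (by omega)
    have hi1 : U.length + (A.length + B.length + 2 - U.length)
        = A.length + 1 + B.length + 1 := by omega
    have hi2 : A.length + B.length + 2 - U.length
        = B.length + 3 + (A.length - 1 - U.length) := by omega
    rw [hi1, W_get_star2, hi2, D_get_A A B (by omega)] at e2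
    have hi3 : A.length - 1 - (A.length - 1 - U.length) = U.length := by omega
    rw [hi3, ← e1] at e2
    simp [dualSym] at e2
  · -- U.length = A.length : success
    obtain ⟨hA, hV⟩ := List.append_inj h1 hka.symm
    rw [← hA, ← hV] at h2
    simp only [List.cons_append, List.append_assoc] at h2
    injection h2 with _ h3
    obtain ⟨hB, h4⟩ := List.append_inj h3 (dualWord_length B)
    refine ⟨?_, hB⟩
    simpa using h4
  · -- A.length < U.length
    exfalso
    rcases Nat.lt_or_ge (A.length + B.length) U.length with hbig | hsmall
    · -- U.length = A.length + B.length + 1 or + 2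
      have e1 := hget 0 (by omega)
      rw [Nat.add_zero, List.getElem?_cons_zero] at e1
      rcases Nat.eq_or_lt_of_le hbig with heq | hlt
      · rw [show U.length = A.length + 1 + B.length by omega, W_get_star1] at e1
        simp at e1
      · rw [show U.length = A.length + 1 + B.length + 1 by omega, W_get_star2] at e1
        simp at e1
    · -- A.length < U.length ≤ A.length + B.length
      have e1 := hget 0 (by omega)
      rw [Nat.add_zero, List.getElem?_cons_zero,
        show U.length = A.length + 1 + (U.length - A.length - 1) by omega,
        W_get_B A B (by omega)] at e1
      have e2 := hget (A.length + B.length + 1 - U.length) (by omega)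
      have hi1 : U.length + (A.length + B.length + 1 - U.length)
          = A.length + 1 + B.length := by omega
      have hi2 : A.length + B.length + 1 - U.length
          = 1 + (A.length + B.length - U.length) := by omega
      rw [hi1, W_get_star1, hi2, D_get_B A B (by omega)] at e2
      have hi3 : B.length - 1 - (A.length + B.length - U.length)
          = U.length - A.length - 1 := by omega
      rw [hi3, ← e1] at e2
      simp [dualSym] at e2

/-- If `C(A-B**) = C(A**B+)` then `A` and `B` are self-dual. -/
theorem stmt_11 (A B : List Symb)
    (h : SameCycle (A ++ Symb.minus :: (B ++ [Symb.star, Symb.star]))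
                   (A ++ [Symb.star, Symb.star] ++ (B ++ [Symb.plus]))) :
    dualWord A = A ∧ dualWord B = B := by
  obtain ⟨U, V, h1, h2 | h2⟩ := h
  · exfalso
    have hc : (A ++ Symb.minus :: (B ++ [Symb.star, Symb.star])).count Symb.plus
        = (A ++ [Symb.star, Symb.star] ++ (B ++ [Symb.plus])).count Symb.plus := by
      rw [h1, h2]
      simp [List.count_append]
      omega
    simp [List.count_append, List.count_cons] at hc
  · have hdw : dualWord (A ++ [Symb.star, Symb.star] ++ (B ++ [Symb.plus]))
        = Symb.minus :: (dualWord B ++ ([Symb.star, Symb.star] ++ dualWord A)) := by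
      simp [dualWord, dualSym]
    rw [hdw] at h2
    by_cases hV : V = []
    · subst hV
      rw [List.append_nil] at h1
      rw [List.nil_append] at h2
      exact key A B [] (A ++ Symb.minus :: (B ++ [Symb.star, Symb.star]))
        (by simp) (by rw [List.append_nil, h1, ← h2]) (by simp)
    · refine key A B U V h1 h2 ?_
      have := congrArg List.length h1
      simp at this
      have hVpos : 0 < V.length := List.length_pos_iff.mpr hV
      omega
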